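/- Let S ∈ sp(n,ℂ) have purely real spectrum, Re Q_S ≥ 0, nilpotent part N with N² = 0, and assume in addition that S satisfies condition (R): the generalized eigenspace sum V_λ ⊕ V_{−λ} is invariant under complex conjugation for every λ ∈ ℝ∖{0}. Write the semisimple part D = D₁ + iD₂ with D₁, D₂ real. Then [D₁,D₂] = 0 if and only if D₁ = 0. -/

import Mathlib

open MeasureTheory Complex Matrix

noncomputable section

/-- Index type for `2n`-dimensional (symplectic) vectors: `X`-coordinates `inl j`,
`Y`-coordinates `inr j`. -/
abbrev Idx (n : ℕ) := Fin n ⊕ Fin n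

/-- The standard symplectic matrix `J = [[0, I],[-I, 0]]` over `ℂ`. -/
def Jmat (n : ℕ) : Matrix (Idx n) (Idx n) ℂ := Matrix.fromBlocks 0 1 (-1) 0

/-- The standard symplectic matrix `J = [[0, I],[-I, 0]]` over `ℝ`. -/
def JmatR (n : ℕ) : Matrix (Idx n) (Idx n) ℝ := Matrix.fromBlocks 0 1 (-1) 0

/-- The standard symplectic form `σ(z,w) = ᵗz J w` on `ℂ^{2n}`. -/
def sigmaC (n : ℕ) (z w : Idx n → ℂ) : ℂ := z ⬝ᵥ (Jmat n).mulVec w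

/-- The standard symplectic form on `ℝ^{2n}`. -/
def sigmaR (n : ℕ) (v w : Idx n → ℝ) : ℝ := v ⬝ᵥ (JmatR n).mulVec w

/-- Inclusion of real vectors into `ℂ^{2n}`. -/
def realVec (n : ℕ) (v : Idx n → ℝ) : Idx n → ℂ := fun i => (v i : ℂ)

/-- Complex conjugation on `ℂ^{2n}` relative to the real form `ℝ^{2n}`. -/
def conjVec (n : ℕ) (z : Idx n → ℂ) : Idx n → ℂ := fun i => (starRingEnd ℂ) (z i)

/-- `S ∈ sp(n, ℂ)`, i.e. `σ(Sz, w) + σ(z, Sw) = 0` for all `z, w`. -/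
def InSp (n : ℕ) (S : Matrix (Idx n) (Idx n) ℂ) : Prop := Sᵀ * Jmat n + Jmat n * S = 0

/-- `Re Q_S ≥ 0`: the real part of the quadratic form `Q_S(v) = σ(v, Sv)` is
positive semi-definite on `ℝ^{2n}`. -/
def RePosQ (n : ℕ) (S : Matrix (Idx n) (Idx n) ℂ) : Prop :=
  ∀ v : Idx n → ℝ, 0 ≤ (sigmaC n (realVec n v) (S.mulVec (realVec n v))).re

/-- The generalized eigenspace `V_μ` of the matrix `S` for the eigenvalue `μ`. -/
def genEig (n : ℕ) (S : Matrix (Idx n) (Idx n) ℂ) (μ : ℂ) : Submodule ℂ (Idx n → ℂ) :=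
  Module.End.maxGenEigenspace (Matrix.mulVecLin S) μ

/-- `V_r`: the sum of the generalized eigenspaces of `S` for real eigenvalues. -/
def Vreal (n : ℕ) (S : Matrix (Idx n) (Idx n) ℂ) : Submodule ℂ (Idx n → ℂ) :=
  ⨆ lam : ℝ, genEig n S (lam : ℂ)

/-- `V_i`: the sum of the generalized eigenspaces of `S` for non-real eigenvalues. -/
def Vimag (n : ℕ) (S : Matrix (Idx n) (Idx n) ℂ) : Submodule ℂ (Idx n → ℂ) :=
  ⨆ μ : {z : ℂ // z.im ≠ 0}, genEig n S (μ : ℂ)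

/-- `Sr` is the "real part" `S_r` of `S`: it agrees with `S` on `V_r` and vanishes on `V_i`. -/
def IsRealPart (n : ℕ) (S Sr : Matrix (Idx n) (Idx n) ℂ) : Prop :=
  (∀ v ∈ Vreal n S, Sr.mulVec v = S.mulVec v) ∧ ∀ v ∈ Vimag n S, Sr.mulVec v = 0

/-- `Si` is the "imaginary part" `S_i` of `S`: it vanishes on `V_r` and agrees with `S`
on `V_i`. -/
def IsImagPart (n : ℕ) (S Si : Matrix (Idx n) (Idx n) ℂ) : Prop :=
  (∀ v ∈ Vreal n S, Si.mulVec v = 0) ∧ ∀ v ∈ Vimag n S, Si.mulVec v = S.mulVec v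

/-- Condition (R): `V_λ ⊕ V_{−λ}` is invariant under complex conjugation for every
real `λ ≠ 0`. -/
def CondR (n : ℕ) (S : Matrix (Idx n) (Idx n) ℂ) : Prop :=
  ∀ lam : ℝ, lam ≠ 0 →
    ∀ z ∈ genEig n S (lam : ℂ) ⊔ genEig n S (-(lam : ℂ)),
      conjVec n z ∈ genEig n S (lam : ℂ) ⊔ genEig n S (-(lam : ℂ))

/-- `ν = Σ_j ν_j`: the sum of the imaginary parts of the eigenvalues of `S` lying in the
upper half plane, counted with multiplicity. -/
def nuTotal (n : ℕ) (S : Matrix (Idx n) (Idx n) ℂ) : ℝ :=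
  (S.charpoly.roots.map (fun z => max z.im 0)).sum

/-- `S_i ≠ 0`, i.e. `S` has at least one non-real eigenvalue. -/
def HasNonrealEig (n : ℕ) (S : Matrix (Idx n) (Idx n) ℂ) : Prop :=
  ∃ z ∈ S.charpoly.roots, z.im ≠ 0

/-- Semisimple (= diagonalizable over `ℂ`) matrix. -/
def IsSemisimpleMat (n : ℕ) (D : Matrix (Idx n) (Idx n) ℂ) : Prop :=
  ∃ (P : Matrix (Idx n) (Idx n) ℂ) (d : Idx n → ℂ), IsUnit P ∧ D = P * Matrix.diagonal d * P⁻¹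

/-- `S = D + N` is the Jordan decomposition of `S`: `D` semisimple, `N` nilpotent,
`DN = ND`. -/
def IsJordanDecomp (n : ℕ) (S D N : Matrix (Idx n) (Idx n) ℂ) : Prop :=
  S = D + N ∧ IsSemisimpleMat n D ∧ IsNilpotent N ∧ D * N = N * D

/-!
If `D₁` and `D₂` commute, then `D = D₁ + i D₂` and `D̄ = D₁ - i D₂` are commuting semisimple
matrices, hence simultaneously diagonalisable, and `2 D₁ = D + D̄` vanishes as soon as `β = -α` for
every joint eigenvector `D v = α v`, `D̄ v = β v`. Since `N² = 0`, `v` and `v̄` are killed by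
`(S - α)²` and `(S - β̄)²`; the spectrum being real, `α` and `β` are real, and condition (R) forces
`β = ±α`. The case `β = α ≠ 0` is excluded by positivity: a real vector `w` with `(S - a)² w = 0`,
`a ≠ 0`, is isotropic for `Q_S`, so `Re Q_S ≥ 0` makes `S w` purely imaginary; the same applies
to the real vector `i S w`, which forces `S w = 0` and then `w = 0`.
-/

lemma Matrix.sub_smul_one_mulVec {m R : Type*} [Fintype m] [DecidableEq m] [CommRing R]
    (A : Matrix m m R) (a : R) (v : m → R) : (A - a • 1) *ᵥ v = A *ᵥ v - a • v := by
  rw [sub_mulVec, smul_mulVec, one_mulVec]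

lemma Matrix.commute_map_conj_of_commute_re_im {m : Type*} [Fintype m] {D : Matrix m m ℂ}
    (h : D.map Complex.re * D.map Complex.im = D.map Complex.im * D.map Complex.re) :
    Commute D (D.map (starRingEnd ℂ)) := by
  set A := (D.map Complex.re).map Complex.ofRealHom
  set B := (D.map Complex.im).map Complex.ofRealHom
  have hAB : Commute A B := by
    simp only [A, B, Commute, SemiconjBy, ← Matrix.map_mul, h]
  have hD : D = A + Complex.I • B := by
    ext i j; simp [A, B, Complex.ext_iff]
  have hDc : D.map (starRingEnd ℂ) = A - Complex.I • B := by
    ext i j; simp [A, B, Complex.ext_iff]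
  rw [hDc, hD]
  exact ((Commute.refl A).sub_right (hAB.smul_right _)).add_left
    ((hAB.symm.sub_right ((Commute.refl B).smul_right _)).smul_left _)

namespace Module.End

variable {K V : Type*} [Field K] [IsAlgClosed K] [AddCommGroup V] [Module K V]
  [FiniteDimensional K V]

lemma add_eq_zero_of_commute_of_eigenvalue_eq_neg {f g : End K V} (hfg : Commute f g)
    (hf : ∀ μ, f.maxGenEigenspace μ = f.eigenspace μ)
    (hg : ∀ μ, g.maxGenEigenspace μ = g.eigenspace μ)
    (h : ∀ (α β : K) (v : V), v ≠ 0 → f v = α • v → g v = β • v → β = -α) : f + g = 0 := by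
  let F : Bool → End K V := fun b => cond b f g
  have hF : Pairwise fun i j => Commute (F i) (F j) := by
    rintro (_ | _) (_ | _) hij <;> first | exact absurd rfl hij | exact hfg | exact hfg.symm
  have htop := iSup_iInf_maxGenEigenspace_eq_top_of_iSup_maxGenEigenspace_eq_top_of_commute F hF
    fun i => iSup_maxGenEigenspace_eq_top (F i)
  suffices ⊤ ≤ LinearMap.ker (f + g) from LinearMap.ker_eq_top.mp (top_le_iff.mp this)
  rw [← htop, iSup_le_iff]
  intro χ v hv
  rw [Submodule.mem_iInf] at hv
  have hfv : f v = χ true • v := mem_eigenspace_iff.mp (hf _ ▸ hv true)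
  have hgv : g v = χ false • v := mem_eigenspace_iff.mp (hg _ ▸ hv false)
  rcases eq_or_ne v 0 with rfl | hv0
  · exact zero_mem _
  · rw [LinearMap.mem_ker, LinearMap.add_apply, hfv, hgv, h _ _ v hv0 hfv hgv, neg_smul,
      add_neg_cancel]

end Module.End

section Symplectic

variable {n : ℕ}

lemma Jmat_transpose : (Jmat n)ᵀ = -Jmat n := by
  simp [Jmat, fromBlocks_transpose, fromBlocks_neg]

@[simp] lemma sigmaC_add_left (x y z : Idx n → ℂ) :
    sigmaC n (x + y) z = sigmaC n x z + sigmaC n y z := add_dotProduct ..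

@[simp] lemma sigmaC_add_right (x y z : Idx n → ℂ) :
    sigmaC n x (y + z) = sigmaC n x y + sigmaC n x z := by
  simp [sigmaC, mulVec_add]

@[simp] lemma sigmaC_smul_left (c : ℂ) (x y : Idx n → ℂ) :
    sigmaC n (c • x) y = c * sigmaC n x y := smul_dotProduct ..

@[simp] lemma sigmaC_smul_right (c : ℂ) (x y : Idx n → ℂ) :
    sigmaC n x (c • y) = c * sigmaC n x y := by
  simp [sigmaC, mulVec_smul]

lemma sigmaC_eq_neg_swap (x y : Idx n → ℂ) : sigmaC n x y = -sigmaC n y x := by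
  rw [sigmaC, sigmaC, dotProduct_comm, ← vecMul_transpose, ← dotProduct_mulVec, Jmat_transpose,
    neg_mulVec, dotProduct_neg]

@[simp] lemma sigmaC_self (x : Idx n → ℂ) : sigmaC n x x = 0 := by
  linear_combination sigmaC_eq_neg_swap x x / 2

lemma sigmaC_single_left (i : Idx n) (x : Idx n → ℂ) :
    sigmaC n (Pi.single i 1) x = (Jmat n *ᵥ x) i := by
  simp [sigmaC, single_dotProduct]

variable {S : Matrix (Idx n) (Idx n) ℂ}

lemma InSp.sigmaC_mulVec_left (hS : InSp n S) (x y : Idx n → ℂ) :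
    sigmaC n (S *ᵥ x) y = -sigmaC n x (S *ᵥ y) := by
  rw [sigmaC, sigmaC, ← vecMul_transpose, ← dotProduct_mulVec, mulVec_mulVec,
    eq_neg_of_add_eq_zero_left hS, neg_mulVec, dotProduct_neg, mulVec_mulVec]

lemma InSp.sigmaC_mulVec_symm (hS : InSp n S) (x y : Idx n → ℂ) :
    sigmaC n x (S *ᵥ y) = sigmaC n y (S *ᵥ x) := by
  rw [← neg_neg (sigmaC n x _), ← hS.sigmaC_mulVec_left, sigmaC_eq_neg_swap, neg_neg]

lemma InSp.sigmaC_mulVec_self_eq_zero (hS : InSp n S) {a : ℂ} (ha : a ≠ 0) {w : Idx n → ℂ}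
    (hw : (S - a • 1) ^ 2 *ᵥ w = 0) : sigmaC n w (S *ᵥ w) = 0 := by
  set u := S *ᵥ w - a • w
  have hSu : S *ᵥ u = a • u := by
    rwa [pow_two, ← mulVec_mulVec, sub_smul_one_mulVec, sub_smul_one_mulVec, sub_eq_zero] at hw
  have hSw : S *ᵥ w = u + a • w := by simp [u]
  have huw : sigmaC n u w = 0 := by
    have h := hS.sigmaC_mulVec_left u w
    rw [hSu, hSw] at h
    simp only [sigmaC_smul_left, sigmaC_add_right, sigmaC_smul_right, sigmaC_self] at h
    exact (mul_eq_zero.mp (by linear_combination h : (2 * a) * sigmaC n u w = 0)).resolve_left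
      (mul_ne_zero two_ne_zero ha)
  rw [hSw, sigmaC_add_right, sigmaC_smul_right, sigmaC_self, sigmaC_eq_neg_swap, huw]
  simp

end Symplectic

section Positivity

variable {n : ℕ} {S : Matrix (Idx n) (Idx n) ℂ}

lemma conjVec_eq_star (z : Idx n → ℂ) : conjVec n z = star z := rfl

lemma realVec_re_of_conjVec_eq {w : Idx n → ℂ} (hw : conjVec n w = w) :
    realVec n (fun i => (w i).re) = w :=
  funext fun i => Complex.conj_eq_iff_re.mp (congrFun hw i)

lemma realVec_add_smul (v u : Idx n → ℝ) (t : ℝ) :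
    realVec n (v + t • u) = realVec n v + (t : ℂ) • realVec n u := by
  funext i
  simp [realVec]

lemma realVec_single (i : Idx n) : realVec n (Pi.single i 1) = Pi.single i 1 := by
  funext j
  by_cases h : j = i <;> simp [realVec, h]

lemma RePosQ.re_sigmaC_realVec_mulVec_eq_zero (hpos : RePosQ n S) (hS : InSp n S)
    {w : Idx n → ℂ} (hw : conjVec n w = w) (hq : (sigmaC n w (S *ᵥ w)).re = 0)
    (u : Idx n → ℝ) : (sigmaC n (realVec n u) (S *ᵥ w)).re = 0 := by
  -- `t ↦ Re Q_S(w + t u) ≥ 0` is a quadratic without constant term: its linear term vanishes.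
  have hquad : ∀ t : ℝ, 0 ≤ (sigmaC n (realVec n u) (S *ᵥ realVec n u)).re * (t * t)
      + 2 * (sigmaC n (realVec n u) (S *ᵥ w)).re * t + 0 := by
    intro t
    have h := hpos ((fun i => (w i).re) + t • u)
    rw [realVec_add_smul, realVec_re_of_conjVec_eq hw] at h
    simp only [mulVec_add, mulVec_smul, sigmaC_add_left, sigmaC_add_right, sigmaC_smul_left,
      sigmaC_smul_right, Complex.add_re, Complex.re_ofReal_mul, hq] at h
    rw [hS.sigmaC_mulVec_symm w] at h
    linarith
  have hdisc := discrim_le_zero hquad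
  rw [discrim] at hdisc
  nlinarith

lemma conjVec_eq_neg_of_forall_re_sigmaC_eq_zero {x : Idx n → ℂ}
    (h : ∀ u : Idx n → ℝ, (sigmaC n (realVec n u) x).re = 0) : conjVec n x = -x := by
  have hre : ∀ i, (x i).re = 0 := by
    rintro (j | j)
    · simpa [realVec_single, sigmaC_single_left, Jmat, fromBlocks_mulVec, neg_mulVec] using
        h (Pi.single (Sum.inr j) 1)
    · simpa [realVec_single, sigmaC_single_left, Jmat, fromBlocks_mulVec] using
        h (Pi.single (Sum.inl j) 1)
  funext i
  simp [conjVec, Complex.ext_iff, hre i]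

lemma RePosQ.conjVec_mulVec_eq_neg (hpos : RePosQ n S) (hS : InSp n S) {a : ℂ} (ha : a ≠ 0)
    {w : Idx n → ℂ} (hw : conjVec n w = w) (h2 : (S - a • 1) ^ 2 *ᵥ w = 0) :
    conjVec n (S *ᵥ w) = -(S *ᵥ w) :=
  conjVec_eq_neg_of_forall_re_sigmaC_eq_zero <| hpos.re_sigmaC_realVec_mulVec_eq_zero hS hw <| by
    rw [hS.sigmaC_mulVec_self_eq_zero ha h2, Complex.zero_re]

lemma RePosQ.eq_zero_of_sq_mulVec_eq_zero (hpos : RePosQ n S) (hS : InSp n S) {a : ℝ}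
    (ha : a ≠ 0) {w : Idx n → ℂ} (hw : conjVec n w = w) (h2 : (S - (a : ℂ) • 1) ^ 2 *ᵥ w = 0) :
    w = 0 := by
  have haC : (a : ℂ) ≠ 0 := Complex.ofReal_ne_zero.mpr ha
  set y := S *ᵥ w
  have hSy : S *ᵥ y = (2 * a : ℂ) • y - (a : ℂ) ^ 2 • w := by
    rw [pow_two, ← mulVec_mulVec, sub_smul_one_mulVec, sub_smul_one_mulVec] at h2
    simp only [mulVec_sub, mulVec_smul] at h2
    linear_combination (norm := module) h2
  have hy : conjVec n y = -y := hpos.conjVec_mulVec_eq_neg hS haC hw h2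
  have hx : conjVec n (Complex.I • y) = Complex.I • y := by
    rw [conjVec_eq_star] at hy ⊢
    simp [star_smul, hy]
  have hx2 : (S - (a : ℂ) • 1) ^ 2 *ᵥ (Complex.I • y) = 0 := by
    have hc : Commute ((S - (a : ℂ) • 1) ^ 2) S :=
      ((Commute.refl S).sub_left ((Commute.one_left S).smul_left _)).pow_left 2
    rw [mulVec_smul, mulVec_mulVec, hc.eq, ← mulVec_mulVec, h2, mulVec_zero, smul_zero]
  have hSx := hpos.conjVec_mulVec_eq_neg hS haC hx hx2
  have hconj : conjVec n (S *ᵥ (Complex.I • y)) =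
      -Complex.I • (-(2 * a : ℂ) • y - (a : ℂ) ^ 2 • w) := by
    rw [conjVec_eq_star] at hy hw ⊢
    rw [mulVec_smul, hSy]
    simp [star_smul, hy, hw]
  rw [hconj, mulVec_smul, hSy] at hSx
  have hy0 : y = 0 := by
    have h4 : (4 * a * Complex.I) • y = 0 := by linear_combination (norm := module) hSx
    exact (smul_eq_zero.mp h4).resolve_left (by simp [ha])
  rw [hy0, mulVec_zero, smul_zero, zero_sub, eq_comm, neg_eq_zero] at hSy
  exact (smul_eq_zero.mp hSy).resolve_left (pow_ne_zero 2 haC)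

lemma RePosQ.eq_zero_of_sq_mulVec_eq_zero_of_conjVec (hpos : RePosQ n S) (hS : InSp n S)
    {a : ℝ} (ha : a ≠ 0) {v : Idx n → ℂ} (hv : (S - (a : ℂ) • 1) ^ 2 *ᵥ v = 0)
    (hvb : (S - (a : ℂ) • 1) ^ 2 *ᵥ conjVec n v = 0) : v = 0 := by
  have hsum := hpos.eq_zero_of_sq_mulVec_eq_zero hS ha (w := v + conjVec n v)
    (by simp [conjVec_eq_star, add_comm]) (by rw [mulVec_add, hv, hvb, add_zero])
  have hdiff := hpos.eq_zero_of_sq_mulVec_eq_zero hS ha (w := Complex.I • (v - conjVec n v))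
    (by simp [conjVec_eq_star, star_smul, ← smul_neg])
    (by rw [mulVec_smul, mulVec_sub, hv, hvb, sub_zero, smul_zero])
  rw [smul_eq_zero, or_iff_right Complex.I_ne_zero] at hdiff
  linear_combination (norm := module) (1 / 2 : ℂ) • hsum + (1 / 2 : ℂ) • hdiff

end Positivity

section GenEig

variable {n : ℕ} {S : Matrix (Idx n) (Idx n) ℂ}

lemma mem_genEig_of_pow_mulVec_eq_zero {μ : ℂ} {k : ℕ} {v : Idx n → ℂ}
    (h : (S - μ • 1) ^ k *ᵥ v = 0) : v ∈ genEig n S μ := by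
  have hpow : (mulVecLin S - μ • 1) ^ k = mulVecLin ((S - μ • 1) ^ k) := by
    change (toLinAlgEquiv' S - μ • 1) ^ k = toLinAlgEquiv' ((S - μ • 1) ^ k)
    rw [map_pow, map_sub, map_smul, map_one]
  rw [genEig, Module.End.mem_maxGenEigenspace]
  exact ⟨k, by rw [hpow, mulVecLin_apply, h]⟩

lemma im_eq_zero_of_mem_genEig (hreal : ∀ z ∈ S.charpoly.roots, z.im = 0) {μ : ℂ}
    {v : Idx n → ℂ} (hv : v ∈ genEig n S μ) (hv0 : v ≠ 0) : μ.im = 0 := by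
  have hgen : Module.End.HasUnifEigenvalue (mulVecLin S) μ ⊤ :=
    (Submodule.ne_bot_iff _).mpr ⟨v, hv, hv0⟩
  have hμ := (hgen.lt zero_lt_one).mem_spectrum
  rw [← toLin'_apply', spectrum_toLin', mem_spectrum_iff_isRoot_charpoly] at hμ
  exact hreal μ ((Polynomial.mem_roots (charpoly_monic S).ne_zero).mpr hμ)

lemma eq_zero_of_mem_genEig_of_mem_sup {α β : ℂ} (hβα : β ≠ α) (hβα' : β ≠ -α)
    {v : Idx n → ℂ} (hv : v ∈ genEig n S β) (hv' : v ∈ genEig n S α ⊔ genEig n S (-α)) :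
    v = 0 := by
  have hdisj := (Module.End.independent_maxGenEigenspace (mulVecLin S)).disjoint_biSup
    (y := {α, -α}) (x := β) (by simp [hβα, hβα'])
  rw [iSup_pair] at hdisj
  exact Submodule.disjoint_def.mp hdisj v hv hv'

lemma CondR.eq_or_eq_neg (hR : CondR n S) {a b : ℝ} {v : Idx n → ℂ} (hv0 : v ≠ 0)
    (hv : v ∈ genEig n S a) (hvb : conjVec n v ∈ genEig n S b) : b = a ∨ b = -a := by
  by_contra! hne
  have hvb0 : conjVec n v ≠ 0 := by simpa [conjVec_eq_star] using hv0
  rcases eq_or_ne a 0 with rfl | ha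
  · have hb : b ≠ 0 := by simpa using hne.1
    have hv' := hR b hb _ (Submodule.mem_sup_left hvb)
    rw [conjVec_eq_star, conjVec_eq_star, star_star] at hv'
    refine hv0 (eq_zero_of_mem_genEig_of_mem_sup ?_ ?_ hv hv') <;> simpa [eq_comm] using hb
  · refine hvb0 (eq_zero_of_mem_genEig_of_mem_sup ?_ ?_ hvb
      (hR a ha v (Submodule.mem_sup_left hv)))
    · exact_mod_cast hne.1
    · exact_mod_cast hne.2

end GenEig

section JordanDecomp

variable {n : ℕ} {S D N : Matrix (Idx n) (Idx n) ℂ}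

lemma IsSemisimpleMat.maxGenEigenspace_eq_eigenspace (hD : IsSemisimpleMat n D) (μ : ℂ) :
    Module.End.maxGenEigenspace (mulVecLin D) μ = Module.End.eigenspace (mulVecLin D) μ := by
  obtain ⟨P, d, hP, rfl⟩ := hD
  have hdet := (isUnit_iff_isUnit_det P).mp hP
  let b : Module.Basis (Idx n) ℂ (Idx n → ℂ) :=
    (Pi.basisFun ℂ (Idx n)).map (P.toLinearEquiv' (invertibleOfIsUnitDet P hdet))
  have hb : mulVecLin (P * diagonal d * P⁻¹) = toLin b b (diagonal d) := by
    refine b.ext fun j => ?_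
    have hbj (i : Idx n) : b i = P *ᵥ Pi.single i 1 := by
      rw [Module.Basis.map_apply, Pi.basisFun_apply]
      rfl
    rw [toLin_self, mulVecLin_apply, hbj, mulVec_mulVec, Matrix.mul_assoc, Matrix.mul_assoc,
      nonsing_inv_mul P hdet, Matrix.mul_one, ← mulVec_mulVec, mulVec_single_one]
    simp [diagonal_apply, hbj]
  rw [hb, maxGenEigenspace_toLin_diagonal_eq_eigenspace]

lemma IsSemisimpleMat.map_conj (hD : IsSemisimpleMat n D) :
    IsSemisimpleMat n (D.map (starRingEnd ℂ)) := by
  obtain ⟨P, d, hP, rfl⟩ := hD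
  have hdet := (isUnit_iff_isUnit_det P).mp hP
  have hinv : (P.map (starRingEnd ℂ))⁻¹ = P⁻¹.map (starRingEnd ℂ) := by
    refine inv_eq_right_inv ?_
    rw [← Matrix.map_mul, mul_nonsing_inv P hdet, Matrix.map_one _ (map_zero _) (map_one _)]
  refine ⟨P.map (starRingEnd ℂ), starRingEnd ℂ ∘ d, hP.map (starRingEnd ℂ).mapMatrix, ?_⟩
  rw [hinv, Matrix.map_mul, Matrix.map_mul, diagonal_map (map_zero _)]
  rfl

lemma conjVec_mulVec (A : Matrix (Idx n) (Idx n) ℂ) (v : Idx n → ℂ) :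
    conjVec n (A *ᵥ v) = A.map (starRingEnd ℂ) *ᵥ conjVec n v :=
  funext (RingHom.map_mulVec (starRingEnd ℂ) A v)

lemma sq_sub_smul_one_mulVec_eq_zero (hSDN : S = D + N) (hDN : D * N = N * D)
    (hN2 : N * N = 0) {α : ℂ} {v : Idx n → ℂ} (hv : D *ᵥ v = α • v) :
    (S - α • 1) ^ 2 *ᵥ v = 0 := by
  have hSv : (S - α • 1) *ᵥ v = N *ᵥ v := by
    rw [sub_smul_one_mulVec, hSDN, add_mulVec, hv, add_sub_cancel_left]
  rw [pow_two, ← mulVec_mulVec, hSv, sub_smul_one_mulVec, hSDN, add_mulVec, mulVec_mulVec, hDN,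
    ← mulVec_mulVec, hv, mulVec_mulVec, hN2, zero_mulVec, add_zero, mulVec_smul, sub_self]

lemma eigenvalue_map_conj_eq_neg (hS : InSp n S) (hreal : ∀ z ∈ S.charpoly.roots, z.im = 0)
    (hpos : RePosQ n S) (hSDN : S = D + N) (hDN : D * N = N * D) (hN2 : N * N = 0)
    (hR : CondR n S) {α β : ℂ} {v : Idx n → ℂ} (hv0 : v ≠ 0) (hDv : D *ᵥ v = α • v)
    (hDcv : D.map (starRingEnd ℂ) *ᵥ v = β • v) : β = -α := by
  have hDvb : D *ᵥ conjVec n v = starRingEnd ℂ β • conjVec n v := by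
    have h := congrArg (conjVec n) hDcv
    rw [conjVec_mulVec, (by ext; simp : (D.map (starRingEnd ℂ)).map (starRingEnd ℂ) = D)] at h
    simpa [conjVec_eq_star, star_smul] using h
  have hvb0 : conjVec n v ≠ 0 := by simpa [conjVec_eq_star] using hv0
  have hv2 := sq_sub_smul_one_mulVec_eq_zero hSDN hDN hN2 hDv
  have hvb2 := sq_sub_smul_one_mulVec_eq_zero hSDN hDN hN2 hDvb
  obtain ⟨a, rfl⟩ := Complex.conj_eq_iff_real.mp <| Complex.conj_eq_iff_im.mpr <|
    im_eq_zero_of_mem_genEig hreal (mem_genEig_of_pow_mulVec_eq_zero hv2) hv0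
  obtain ⟨b, hb⟩ := Complex.conj_eq_iff_real.mp <| Complex.conj_eq_iff_im.mpr <|
    im_eq_zero_of_mem_genEig hreal (mem_genEig_of_pow_mulVec_eq_zero hvb2) hvb0
  obtain rfl : β = b := by rw [← Complex.conj_conj β, hb, Complex.conj_ofReal]
  rw [hb] at hvb2
  rcases hR.eq_or_eq_neg hv0 (mem_genEig_of_pow_mulVec_eq_zero hv2)
    (mem_genEig_of_pow_mulVec_eq_zero hvb2) with rfl | rfl
  · rcases eq_or_ne b 0 with rfl | hb0
    · simp
    · exact absurd (hpos.eq_zero_of_sq_mulVec_eq_zero_of_conjVec hS hb0 hv2 hvb2) hv0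
  · exact Complex.ofReal_neg a

end JordanDecomp

/-- if moreover condition (R) holds, then `[D₁, D₂] = 0` iff `D₁ = 0`. -/
theorem statement9 (n : ℕ) (S D N : Matrix (Idx n) (Idx n) ℂ)
    (hS : InSp n S) (hreal : ∀ z ∈ S.charpoly.roots, z.im = 0)
    (hpos : RePosQ n S) (hJ : IsJordanDecomp n S D N) (hN2 : N * N = 0)
    (hR : CondR n S) :
    (D.map Complex.re) * (D.map Complex.im) = (D.map Complex.im) * (D.map Complex.re) ↔
      D.map Complex.re = 0 := by
  obtain ⟨hSDN, hD, -, hDN⟩ := hJ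
  refine ⟨fun hcomm => ?_, fun h => by rw [h, Matrix.zero_mul, Matrix.mul_zero]⟩
  have hsum : toLinAlgEquiv' (D + D.map (starRingEnd ℂ)) = 0 := by
    rw [map_add]
    exact Module.End.add_eq_zero_of_commute_of_eigenvalue_eq_neg
      ((commute_map_conj_of_commute_re_im hcomm).map toLinAlgEquiv')
      hD.maxGenEigenspace_eq_eigenspace hD.map_conj.maxGenEigenspace_eq_eigenspace
      fun _ _ _ hv0 hDv hDcv =>
        eigenvalue_map_conj_eq_neg hS hreal hpos hSDN hDN hN2 hR hv0 hDv hDcv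
  rw [map_eq_zero_iff _ toLinAlgEquiv'.injective] at hsum
  ext i j
  simpa [Complex.add_conj] using congrFun (congrFun hsum i) j
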